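/- Let X be a finite set with |X| > 2, let ε > 0, let W be a finite nonempty action set, and let ℓ : W → X → ℝ be strictly monotone with respect to some metric d on X, i.e. there exist a bijection α : W → X and a strictly increasing function m : ℝ → ℝ such that ℓ w x = m (d (α w) x) for all w, x. Then there is no ε·d_D-private channel on X that is universally ℓ-optimal within the ε·d_D-privacy type (where d_D is the discrete metric). -/

import Mathlib

/-!
Shifting the loss by `m 0` makes `ℓ w (α w) = 0`. For a two-point prior on `{a, b}` the posterior
loss of a channel is a sum over its outputs of `G (u, v)`, the Bayes risk of the prior `(u, v)`;
`G` is concave and positively homogeneous, and randomised response on `{a, b}` is private, so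
every universally optimal channel `M` satisfies
`∑ y, G (u * M a y, v * M b y) ≤ (G (u * e, v) + G (u, v * e)) / (1 + e)` with `e = exp ε`.

On a pair `a, b` at minimal distance this forces every output to have likelihood ratio exactly
`e` or `1 / e`. For a third point `c`, either some output of `M` lies strictly inside the privacy
cone of `(a, c)`, or the row of `c` equals the row of `b`; either way optimality yields
`G (u * e, v) + G (u, v * e) = (1 + e) * G (u, v)` on a pair. Then `f r = G (r, 1)` is bounded,
`O(r)` as `r → 0` and positive at `1`, while its increments along the grid `e ^ n` grow
geometrically, which is impossible.
-/

open Finset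

/-- A channel from `X` to `Y`: nonnegative entries and each row sums to 1. -/
def IsChannel {X Y : Type} [Fintype Y] (M : X → Y → ℝ) : Prop :=
  (∀ x y, 0 ≤ M x y) ∧ ∀ x, ∑ y, M x y = 1

/-- The `ε·d_D`-privacy constraints (discrete metric). -/
def IsPrivateD {X Y : Type} (ε : ℝ) (M : X → Y → ℝ) : Prop :=
  ∀ x x' y, x ≠ x' → M x y ≤ Real.exp ε * M x' y

/-- `d` is a metric on `X`. -/
def IsMetric {X : Type} (d : X → X → ℝ) : Prop :=
  (∀ x, d x x = 0) ∧ (∀ x x' : X, x ≠ x' → 0 < d x x') ∧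
    (∀ x x', d x x' = d x' x) ∧ ∀ x y z, d x z ≤ d x y + d y z

/-- A prior on `X`. -/
def IsPrior {X : Type} [Fintype X] (π : X → ℝ) : Prop :=
  (∀ x, 0 ≤ π x) ∧ ∑ x, π x = 1

/-- Posterior expected loss `U_ℓ[π⟩M]`. -/
noncomputable def postLoss {X Y W : Type} [Fintype X] [Fintype Y] [Fintype W] [Nonempty W]
    (π : X → ℝ) (M : X → Y → ℝ) (ℓ : W → X → ℝ) : ℝ :=
  ∑ y, Finset.univ.inf' Finset.univ_nonempty fun w => ∑ x, π x * M x y * ℓ w x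

/-- Universal `ℓ`-optimality within the `ε·d_D`-privacy type. -/
def UnivOptimalD {X W Y : Type} [Fintype X] [Fintype W] [Nonempty W] [Fintype Y]
    (ε : ℝ) (M : X → Y → ℝ) (ℓ : W → X → ℝ) : Prop :=
  ∀ (Y' : Type) [Fintype Y'] [Nonempty Y'] (M' : X → Y' → ℝ),
    IsChannel M' → IsPrivateD ε M' →
      ∀ π : X → ℝ, IsPrior π → postLoss π M ℓ ≤ postLoss π M' ℓ

section PostLoss

variable {X Y W : Type} [Fintype X] [Fintype Y] [Fintype W] [Nonempty W]

theorem postLoss_smul {c : ℝ} (hc : 0 ≤ c) (π : X → ℝ) (M : X → Y → ℝ)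
    (ℓ : W → X → ℝ) : postLoss (c • π) M ℓ = c * postLoss π M ℓ := by
  rw [postLoss, postLoss, mul_sum]
  refine sum_congr rfl fun y _ => ?_
  rw [apply_inf'_eq_inf'_comp _ (c * ·) fun _ _ => (monotone_mul_left_of_nonneg hc).map_min]
  simp only [Function.comp_def, Pi.smul_apply, smul_eq_mul, mul_sum, mul_assoc]

theorem postLoss_sub_const {π : X → ℝ} {M : X → Y → ℝ} (hπ : ∑ x, π x = 1)
    (hM : ∀ x, ∑ y, M x y = 1) (ℓ : W → X → ℝ) (C : ℝ) :
    postLoss π M (fun w x => ℓ w x - C) = postLoss π M ℓ - C := by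
  have hmass : ∑ y, ∑ x, π x * M x y = 1 := by
    rw [sum_comm]; simp [← mul_sum, hM, hπ]
  have hcol : ∀ y, (univ.inf' univ_nonempty fun w => ∑ x, π x * M x y * (ℓ w x - C)) =
      (univ.inf' univ_nonempty fun w => ∑ x, π x * M x y * ℓ w x) - C * ∑ x, π x * M x y :=
    fun y => by
      rw [apply_inf'_eq_inf'_comp _ (· - C * ∑ x, π x * M x y)
        fun _ _ => (min_sub_sub_right _ _ _).symm]
      simp only [Function.comp_def, mul_sub, sum_sub_distrib, sum_mul, mul_comm C]
  rw [postLoss, postLoss, sum_congr rfl fun y _ => hcol y, sum_sub_distrib, ← mul_sum, hmass,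
    mul_one]

theorem UnivOptimalD.sub_const {ε : ℝ} {M : X → Y → ℝ} {ℓ : W → X → ℝ}
    (h : UnivOptimalD ε M ℓ) (hM : IsChannel M) (C : ℝ) :
    UnivOptimalD ε M fun w x => ℓ w x - C := by
  intro Y' _ _ M' hM' hM'p π hπ
  rw [postLoss_sub_const hπ.2 hM.2, postLoss_sub_const hπ.2 hM'.2]
  linarith [h Y' M' hM' hM'p π hπ]

theorem UnivOptimalD.postLoss_le {ε : ℝ} {M : X → Y → ℝ} {ℓ : W → X → ℝ}
    (h : UnivOptimalD ε M ℓ) {Y' : Type} [Fintype Y'] [Nonempty Y'] {M' : X → Y' → ℝ}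
    (hM' : IsChannel M') (hM'p : IsPrivateD ε M') {π : X → ℝ} (hπ : ∀ x, 0 ≤ π x) :
    postLoss π M ℓ ≤ postLoss π M' ℓ := by
  set s := ∑ x, π x
  by_cases hs : s = 0
  · have hπ0 : π = (0 : ℝ) • π := by
      ext x
      simp [(sum_eq_zero_iff_of_nonneg fun x _ => hπ x).1 hs x (mem_univ x)]
    rw [hπ0, postLoss_smul le_rfl, postLoss_smul le_rfl, zero_mul, zero_mul]
  · have hprior : IsPrior (s⁻¹ • π) :=
      ⟨fun x => mul_nonneg (inv_nonneg.2 (sum_nonneg fun x _ => hπ x)) (hπ x), by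
        simp [← mul_sum, inv_mul_cancel₀ hs, s]⟩
    rw [← smul_inv_smul₀ hs π, postLoss_smul (sum_nonneg fun x _ => hπ x),
      postLoss_smul (sum_nonneg fun x _ => hπ x)]
    exact mul_le_mul_of_nonneg_left (h Y' M' hM' hM'p _ hprior) (sum_nonneg fun x _ => hπ x)

end PostLoss

section PairRisk

variable {W X : Type} [Fintype W] [Nonempty W] (L : W → X → ℝ) (a b : X)

/-- The Bayes risk of `L` for the unnormalised prior with mass `u` at `a` and `v` at `b`: the
contribution of one output column to `postLoss`. -/
noncomputable def pairRisk (u v : ℝ) : ℝ :=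
  univ.inf' univ_nonempty fun w => u * L w a + v * L w b

theorem pairRisk_le (w : W) (u v : ℝ) : pairRisk L a b u v ≤ u * L w a + v * L w b :=
  inf'_le _ (mem_univ w)

theorem pairRisk_smul {c : ℝ} (hc : 0 ≤ c) (u v : ℝ) :
    pairRisk L a b (c * u) (c * v) = c * pairRisk L a b u v := by
  rw [pairRisk, pairRisk,
    apply_inf'_eq_inf'_comp _ (c * ·) fun _ _ => (monotone_mul_left_of_nonneg hc).map_min]
  simp only [Function.comp_def, mul_add, mul_assoc]

theorem smul_add_smul_le_pairRisk {s t : ℝ} (hs : 0 ≤ s) (ht : 0 ≤ t)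
    (u₁ v₁ u₂ v₂ : ℝ) :
    s * pairRisk L a b u₁ v₁ + t * pairRisk L a b u₂ v₂ ≤
      pairRisk L a b (s * u₁ + t * u₂) (s * v₁ + t * v₂) := by
  refine le_inf' _ _ fun w _ => ?_
  nlinarith [mul_le_mul_of_nonneg_left (pairRisk_le L a b w u₁ v₁) hs,
    mul_le_mul_of_nonneg_left (pairRisk_le L a b w u₂ v₂) ht]

theorem pairRisk_add_le (u₁ v₁ u₂ v₂ : ℝ) :
    pairRisk L a b u₁ v₁ + pairRisk L a b u₂ v₂ ≤
      pairRisk L a b (u₁ + u₂) (v₁ + v₂) := by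
  simpa using smul_add_smul_le_pairRisk L a b zero_le_one zero_le_one u₁ v₁ u₂ v₂

theorem pairRisk_add_eq_of_smul_add_smul_eq {s t : ℝ} (hs : 0 < s) (ht : 0 < t)
    {u₁ v₁ u₂ v₂ : ℝ}
    (h : pairRisk L a b (s * u₁ + t * u₂) (s * v₁ + t * v₂) =
      s * pairRisk L a b u₁ v₁ + t * pairRisk L a b u₂ v₂) :
    pairRisk L a b (u₁ + u₂) (v₁ + v₂) =
      pairRisk L a b u₁ v₁ + pairRisk L a b u₂ v₂ := by
  refine le_antisymm ?_ (pairRisk_add_le L a b u₁ v₁ u₂ v₂)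
  -- peel `ν • (u₁ + u₂, v₁ + v₂)` off the combination, apply superadditivity to the rest
  set ν := min s t
  have hν : 0 < ν := lt_min hs ht
  have hrest := smul_add_smul_le_pairRisk L a b (sub_nonneg.2 (min_le_left s t))
    (sub_nonneg.2 (min_le_right s t)) u₁ v₁ u₂ v₂
  have hsplit := smul_add_smul_le_pairRisk L a b hν.le zero_le_one (u₁ + u₂) (v₁ + v₂)
    ((s - ν) * u₁ + (t - ν) * u₂) ((s - ν) * v₁ + (t - ν) * v₂)
  rw [show ν * (u₁ + u₂) + 1 * ((s - ν) * u₁ + (t - ν) * u₂) = s * u₁ + t * u₂ by ring,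
    show ν * (v₁ + v₂) + 1 * ((s - ν) * v₁ + (t - ν) * v₂) = s * v₁ + t * v₂ by ring,
    h] at hsplit
  nlinarith

theorem pairRisk_mul_add_pairRisk_mul_le {e : ℝ} (he : 0 ≤ e) (u v : ℝ) :
    pairRisk L a b (u * e) v + pairRisk L a b u (v * e) ≤ (1 + e) * pairRisk L a b u v := by
  rw [← pairRisk_smul L a b (by linarith)]
  convert pairRisk_add_le L a b (u * e) v u (v * e) using 2 <;> ring

theorem postLoss_single_add_single [Fintype X] [DecidableEq X] {Y : Type} [Fintype Y]
    (N : X → Y → ℝ) (u v : ℝ) :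
    postLoss (Pi.single a u + Pi.single b v) N L =
      ∑ y, pairRisk L a b (u * N a y) (v * N b y) := by
  refine sum_congr rfl fun y _ => inf'_congr _ rfl fun w _ => ?_
  simp [add_mul, sum_add_distrib, Pi.single_apply, mul_assoc]

theorem mul_min_le_pairRisk {κ u v : ℝ} (hL : ∀ w x, 0 ≤ L w x)
    (hcover : ∀ w, κ ≤ L w a ∨ κ ≤ L w b) (hu : 0 ≤ u) (hv : 0 ≤ v) :
    κ * min u v ≤ pairRisk L a b u v := by
  refine le_inf' _ _ fun w _ => ?_
  have hua := mul_nonneg hu (hL w a)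
  have hvb := mul_nonneg hv (hL w b)
  rcases hcover w with h | h
  · nlinarith [mul_le_mul h (min_le_left u v) (le_min hu hv) (hL w a)]
  · nlinarith [mul_le_mul h (min_le_right u v) (le_min hu hv) (hL w b)]

end PairRisk

section RandomizedResponse

variable {X : Type} [DecidableEq X]

/-- Randomised response: report whether the secret is `a`, truthfully with odds `e : 1`. -/
noncomputable def randomizedResponse (e : ℝ) (a x : X) (y : Bool) : ℝ :=
  (if decide (x = a) = y then e else 1) / (1 + e)

theorem isChannel_randomizedResponse {e : ℝ} (he : 0 ≤ e) (a : X) :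
    IsChannel (randomizedResponse e a) := by
  refine ⟨fun x y => div_nonneg (by split_ifs <;> linarith) (by linarith), fun x => ?_⟩
  rw [Fintype.sum_bool, randomizedResponse, randomizedResponse, ← add_div,
    div_eq_one_iff_eq (by positivity)]
  by_cases h : x = a <;> simp [h, add_comm]

theorem isPrivateD_randomizedResponse {ε : ℝ} (hε : 0 ≤ ε) (a : X) :
    IsPrivateD ε (randomizedResponse (Real.exp ε) a) := by
  have he : 1 ≤ Real.exp ε := Real.one_le_exp hε
  intro x x' y _
  unfold randomizedResponse
  rw [mul_div_assoc']
  gcongr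
  split_ifs <;> nlinarith

variable {W : Type} [Fintype W] [Nonempty W] (L : W → X → ℝ)

theorem sum_pairRisk_randomizedResponse {a b : X} (hab : a ≠ b) {e : ℝ} (he : 0 ≤ e)
    (u v : ℝ) :
    ∑ y, pairRisk L a b (u * randomizedResponse e a a y) (v * randomizedResponse e a b y) =
      (pairRisk L a b (u * e) v + pairRisk L a b u (v * e)) / (1 + e) := by
  have hc : 0 ≤ 1 / (1 + e) := by positivity
  simp only [Fintype.sum_bool, randomizedResponse, hab.symm, decide_true, decide_false,
    if_true, if_false, Bool.false_eq_true, Bool.true_eq_false]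
  rw [show u * (e / (1 + e)) = 1 / (1 + e) * (u * e) by ring,
    show v * (1 / (1 + e)) = 1 / (1 + e) * v by ring,
    show u * (1 / (1 + e)) = 1 / (1 + e) * u by ring,
    show v * (e / (1 + e)) = 1 / (1 + e) * (v * e) by ring,
    pairRisk_smul L a b hc, pairRisk_smul L a b hc]
  ring

end RandomizedResponse

theorem UnivOptimalD.sum_pairRisk_le {X W Y : Type} [Fintype X] [Fintype W] [Nonempty W]
    [Fintype Y] {L : W → X → ℝ} {ε : ℝ} (hε : 0 ≤ ε) {M : X → Y → ℝ} (h : UnivOptimalD ε M L)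
    {a b : X} (hab : a ≠ b) {u v : ℝ} (hu : 0 ≤ u) (hv : 0 ≤ v) :
    ∑ y, pairRisk L a b (u * M a y) (v * M b y) ≤
      (pairRisk L a b (u * Real.exp ε) v + pairRisk L a b u (v * Real.exp ε)) /
        (1 + Real.exp ε) := by
  classical
  have hπ : ∀ x, 0 ≤ (Pi.single a u + Pi.single b v : X → ℝ) x := fun x => by
    simp only [Pi.add_apply, Pi.single_apply]
    split_ifs <;> linarith
  have := h.postLoss_le (isChannel_randomizedResponse (Real.exp_pos ε).le a)
    (isPrivateD_randomizedResponse hε a) hπ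
  rwa [postLoss_single_add_single, postLoss_single_add_single,
    sum_pairRisk_randomizedResponse L hab (Real.exp_pos ε).le] at this

structure IsDissimilarity {X : Type} (δ : X → X → ℝ) : Prop where
  self_eq_zero : ∀ x, δ x x = 0
  pos : ∀ x y, x ≠ y → 0 < δ x y
  symm : ∀ x y, δ x y = δ y x

theorem IsDissimilarity.nonneg {X : Type} {δ : X → X → ℝ} (hδ : IsDissimilarity δ)
    (x y : X) : 0 ≤ δ x y := by
  rcases eq_or_ne x y with rfl | hxy
  · exact (hδ.self_eq_zero x).ge
  · exact (hδ.pos x y hxy).le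

theorem IsMetric.isDissimilarity_comp {X : Type} {d : X → X → ℝ} (hd : IsMetric d)
    {m : ℝ → ℝ} (hm : StrictMono m) : IsDissimilarity fun x y => m (d x y) - m 0 where
  self_eq_zero x := by rw [hd.1, sub_self]
  pos x y hxy := sub_pos.2 (hm (hd.2.1 x y hxy))
  symm x y := by rw [hd.2.2.1]

theorem exists_ne_forall_le_of_one_lt_card {X : Type} [Fintype X] (hX : 1 < Fintype.card X)
    (δ : X → X → ℝ) : ∃ a b, a ≠ b ∧ ∀ x y, x ≠ y → δ a b ≤ δ x y := by
  classical
  obtain ⟨x, y, hxy⟩ := Fintype.exists_pair_of_one_lt_card hX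
  obtain ⟨⟨a, b⟩, hab, hmin⟩ :=
    exists_min_image univ.offDiag (fun p => δ p.1 p.2) ⟨(x, y), by simpa using hxy⟩
  exact ⟨a, b, (mem_offDiag.1 hab).2.2, fun x y hxy => hmin (x, y) (by simpa using hxy)⟩

theorem exists_ne_ne_of_two_lt_card {X : Type} [Fintype X] (hX : 2 < Fintype.card X) (a b : X) :
    ∃ c, c ≠ a ∧ c ≠ b := by
  classical
  obtain ⟨c, -, hc⟩ := exists_mem_notMem_of_card_lt_card (s := {a, b}) (t := univ)
    (card_le_two.trans_lt hX)
  exact ⟨c, by simpa [not_or] using hc⟩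

theorem add_div_one_add_le_min {e r s : ℝ} (he : 0 < 1 + e) (hrs : r ≤ e * s)
    (hsr : s ≤ e * r) : (r + s) / (1 + e) ≤ min r s :=
  le_min ((div_le_iff₀ he).2 (by linarith)) ((div_le_iff₀ he).2 (by linarith))

theorem eq_mul_or_eq_mul_of_min_eq {e r s : ℝ} (he : 0 < 1 + e)
    (h : min r s = (r + s) / (1 + e)) : s = e * r ∨ r = e * s := by
  rw [eq_div_iff he.ne'] at h
  rcases min_cases r s with ⟨hmin, -⟩ | ⟨hmin, -⟩ <;> rw [hmin] at h
  · exact Or.inl (by linarith)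
  · exact Or.inr (by linarith)

theorem eq_of_eq_mul_or_eq_mul {e x y z : ℝ} (he : 1 < e) (hy : 0 ≤ y) (hz : 0 ≤ z)
    (hxy : y = e * x ∨ x = e * y) (hxz : z = e * x ∨ x = e * z) (hyz : y ≤ e * z)
    (hzy : z ≤ e * y) : y = z := by
  rcases hxy with rfl | rfl <;> rcases hxz with h | h <;> nlinarith

/-- Observing randomised response with odds `e` lowers the Bayes risk of no prior supported on
`{a, b}`: by `sum_pairRisk_randomizedResponse` the risk after the observation is the right-hand
side divided by `1 + e`, and `pairRisk L a b u v` is the risk before it. -/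
def RandomizedResponseUninformative {W X : Type} [Fintype W] [Nonempty W] (L : W → X → ℝ)
    (a b : X) (e : ℝ) : Prop :=
  ∀ u v, 0 ≤ u → 0 ≤ v →
    (1 + e) * pairRisk L a b u v ≤ pairRisk L a b (u * e) v + pairRisk L a b u (v * e)

section Optimality

variable {X W Y : Type} [Fintype X] [Fintype W] [Nonempty W] [Fintype Y] {L : W → X → ℝ}
  {ε : ℝ} {M : X → Y → ℝ}

/-- On a pair at minimal distance, randomised response already meets the lower bound that
privacy imposes on the Bayes risk, so an optimal channel must meet it too; this forces every
output to be at the extreme likelihood ratio. -/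
theorem UnivOptimalD.eq_mul_or_eq_mul_of_minimal {δ : X → X → ℝ} (hδ : IsDissimilarity δ)
    {α : W → X} (hα : Function.Surjective α) (hε : 0 ≤ ε) (hM : IsChannel M)
    (hMp : IsPrivateD ε M) (hopt : UnivOptimalD ε M fun w x => δ (α w) x)
    {a b : X} (hab : a ≠ b) (hmin : ∀ x y, x ≠ y → δ a b ≤ δ x y) (y : Y) :
    M b y = Real.exp ε * M a y ∨ M a y = Real.exp ε * M b y := by
  set e := Real.exp ε
  set L : W → X → ℝ := fun w x => δ (α w) x
  have he : 0 < 1 + e := by positivity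
  have hκ : 0 < δ a b := hδ.pos a b hab
  have hlow : ∀ y, δ a b * min (M a y) (M b y) ≤ pairRisk L a b (M a y) (M b y) := by
    refine fun y => mul_min_le_pairRisk L a b (fun w x => hδ.nonneg _ _) (fun w => ?_)
      (hM.1 a y) (hM.1 b y)
    by_cases hwa : α w = a
    · exact Or.inr (hmin _ _ (hwa ▸ hab))
    · exact Or.inl (hmin _ _ hwa)
  have hup : pairRisk L a b e 1 + pairRisk L a b 1 e ≤ 2 * δ a b := by
    obtain ⟨wa, hwa⟩ := hα a
    obtain ⟨wb, hwb⟩ := hα b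
    have h₁ := pairRisk_le L a b wa e 1
    have h₂ := pairRisk_le L a b wb 1 e
    simp only [L, hwa, hwb, hδ.self_eq_zero, hδ.symm b a] at h₁ h₂
    linarith
  have hsum := hopt.sum_pairRisk_le hε hab zero_le_one zero_le_one
  simp only [one_mul] at hsum
  have hle : ∀ y, δ a b * ((M a y + M b y) / (1 + e)) ≤ δ a b * min (M a y) (M b y) :=
    fun y => mul_le_mul_of_nonneg_left
      (add_div_one_add_le_min he (hMp a b y hab) (hMp b a y hab.symm)) hκ.le
  have heq : ∑ y, δ a b * ((M a y + M b y) / (1 + e)) = ∑ y, δ a b * min (M a y) (M b y) := by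
    refine le_antisymm (sum_le_sum fun y _ => hle y) ?_
    calc ∑ y, δ a b * min (M a y) (M b y)
        ≤ ∑ y, pairRisk L a b (M a y) (M b y) := sum_le_sum fun y _ => hlow y
      _ ≤ (pairRisk L a b e 1 + pairRisk L a b 1 e) / (1 + e) := hsum
      _ ≤ 2 * δ a b / (1 + e) := div_le_div_of_nonneg_right hup he.le
      _ = ∑ y, δ a b * ((M a y + M b y) / (1 + e)) := by
        rw [← mul_sum, ← sum_div, sum_add_distrib, hM.2 a, hM.2 b]
        ring
  have hy := (sum_eq_sum_iff_of_le fun y _ => hle y).1 heq y (mem_univ y)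
  exact eq_mul_or_eq_mul_of_min_eq he (mul_left_cancel₀ hκ.ne' hy).symm

/-- Privacy lets each output column `(M a y, M c y)` be written as a nonnegative combination of
the two columns of randomised response; if some output lies strictly inside the privacy cone,
optimality turns the resulting concavity inequality into an equality. -/
theorem UnivOptimalD.randomizedResponseUninformative_of_ne (hε : 0 < ε) (hM : IsChannel M)
    (hMp : IsPrivateD ε M) (hopt : UnivOptimalD ε M L) {a c : X} (hac : a ≠ c) {y₀ : Y}
    (h₁ : M c y₀ ≠ Real.exp ε * M a y₀) (h₂ : M a y₀ ≠ Real.exp ε * M c y₀) :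
    RandomizedResponseUninformative L a c (Real.exp ε) := by
  intro u v hu hv
  set e := Real.exp ε
  have he : 1 < e := Real.one_lt_exp_iff.2 hε
  have hden : 0 < e ^ 2 - 1 := by nlinarith
  set P := pairRisk L a c (u * e) v
  set Q := pairRisk L a c u (v * e)
  set s : Y → ℝ := fun y => (e * M a y - M c y) / (e ^ 2 - 1)
  set t : Y → ℝ := fun y => (e * M c y - M a y) / (e ^ 2 - 1)
  have hs : ∀ y, 0 ≤ s y := fun y => div_nonneg (by linarith [hMp c a y hac.symm]) hden.le
  have ht : ∀ y, 0 ≤ t y := fun y => div_nonneg (by linarith [hMp a c y hac]) hden.le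
  have hcomb : ∀ y, u * M a y = s y * (u * e) + t y * u ∧ v * M c y = s y * v + t y * (v * e) :=
    fun y => ⟨by simp only [s, t]; field_simp; ring, by simp only [s, t]; field_simp; ring⟩
  have hsplit : ∀ y, s y * P + t y * Q ≤ pairRisk L a c (u * M a y) (v * M c y) := fun y => by
    rw [(hcomb y).1, (hcomb y).2]
    exact smul_add_smul_le_pairRisk L a c (hs y) (ht y) _ _ _ _
  have hmass : ∀ x x', ∑ y, (e * M x y - M x' y) / (e ^ 2 - 1) = 1 / (1 + e) := fun x x' => by
    rw [← sum_div, sum_sub_distrib, ← mul_sum, hM.2, hM.2,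
      div_eq_div_iff hden.ne' (by positivity)]
    ring
  have heq : ∑ y, (s y * P + t y * Q) = ∑ y, pairRisk L a c (u * M a y) (v * M c y) := by
    refine le_antisymm (sum_le_sum fun y _ => hsplit y) ?_
    calc ∑ y, pairRisk L a c (u * M a y) (v * M c y) ≤ (P + Q) / (1 + e) :=
          hopt.sum_pairRisk_le hε.le hac hu hv
      _ = ∑ y, (s y * P + t y * Q) := by
        rw [sum_add_distrib, ← sum_mul, ← sum_mul, hmass, hmass]
        ring
  have hy₀ := (sum_eq_sum_iff_of_le fun y _ => hsplit y).1 heq y₀ (mem_univ y₀)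
  rw [(hcomb y₀).1, (hcomb y₀).2] at hy₀
  have hs₀ : 0 < s y₀ := div_pos (by linarith [(hMp c a y₀ hac.symm).lt_of_ne h₁]) hden
  have ht₀ : 0 < t y₀ := div_pos (by linarith [(hMp a c y₀ hac).lt_of_ne h₂]) hden
  have hadd := pairRisk_add_eq_of_smul_add_smul_eq L a c hs₀ ht₀ hy₀.symm
  rw [show u * e + u = (1 + e) * u by ring, show v + v * e = (1 + e) * v by ring,
    pairRisk_smul L a c (by positivity)] at hadd
  exact hadd.le

theorem UnivOptimalD.randomizedResponseUninformative_of_row_eq (hε : 0 ≤ ε)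
    (hM : IsChannel M) (hopt : UnivOptimalD ε M L) {b c : X} (hbc : b ≠ c) (hrow : M b = M c) :
    RandomizedResponseUninformative L b c (Real.exp ε) := by
  intro u v hu hv
  have h := hopt.sum_pairRisk_le hε hbc hu hv
  have hrisk : ∑ y, pairRisk L b c (u * M b y) (v * M c y) = pairRisk L b c u v := by
    simp_rw [← hrow, mul_comm u, mul_comm v, pairRisk_smul L b c (hM.1 b _), ← sum_mul, hM.2 b,
      one_mul]
  rw [hrisk, le_div_iff₀ (by positivity)] at h
  linarith

end Optimality

/-- The increments `f (e ^ n) - f (e ^ (n - 1))` grow geometrically in `n : ℤ`; they can neither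
stay bounded (if positive) nor let `f` stay above `f 1` near `0` (if nonpositive). -/
theorem false_of_dilation_eq {e K : ℝ} (he : 1 < e) {f : ℝ → ℝ}
    (hf0 : ∀ r, 0 < r → 0 ≤ f r) (hfK : ∀ r, 0 < r → f r ≤ K)
    (hflin : ∀ r, 0 < r → f r ≤ r * K) (hf1 : 0 < f 1)
    (heq : ∀ r, 0 < r → f (r * e) + e * f (r / e) = (1 + e) * f r) : False := by
  have he0 : 0 < e := by linarith
  set D : ℤ → ℝ := fun n => f (e ^ n) - f (e ^ (n - 1))
  have hD : ∀ n : ℤ, D (n + 1) = e * D n := fun n => by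
    have h := heq (e ^ n) (zpow_pos he0 n)
    rw [← zpow_add_one₀ he0.ne', div_eq_mul_inv, ← zpow_sub_one₀ he0.ne'] at h
    simp only [D, add_sub_cancel_right]
    linarith
  have hDk : ∀ (n : ℤ) (k : ℕ), D (n + k) = e ^ k * D n := fun n k => by
    induction k with
    | zero => simp
    | succ k ih => rw [Nat.cast_succ, ← add_assoc, hD, ih, pow_succ]; ring
  rcases le_or_gt (D 0) 0 with h0 | h0
  · have hneg : ∀ k : ℕ, D (-k) ≤ 0 := fun k => by
      have := hDk (-k) k
      rw [neg_add_cancel] at this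
      exact nonpos_of_mul_nonpos_right (this ▸ h0) (pow_pos he0 k)
    have hmono : ∀ k : ℕ, f 1 ≤ f (e ^ (-k : ℤ)) := fun k => by
      induction k with
      | zero => simp
      | succ k ih =>
        have := hneg k
        simp only [D, Nat.cast_succ, neg_add, ← sub_eq_add_neg] at this ⊢
        linarith
    obtain ⟨k, hk⟩ := pow_unbounded_of_one_lt (K / f 1) he
    have hk' := (hmono k).trans (hflin _ (zpow_pos he0 _))
    rw [zpow_neg, zpow_natCast, ← div_eq_inv_mul, le_div_iff₀ (pow_pos he0 k)] at hk'
    rw [div_lt_iff₀ hf1] at hk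
    linarith
  · obtain ⟨k, hk⟩ := pow_unbounded_of_one_lt (K / D 0) he
    rw [div_lt_iff₀ h0] at hk
    have := hDk 0 k
    rw [zero_add] at this
    linarith [hfK _ (zpow_pos he0 (k : ℤ)), hf0 _ (zpow_pos he0 ((k : ℤ) - 1))]

theorem not_randomizedResponseUninformative {X W : Type} [Fintype W] [Nonempty W]
    {δ : X → X → ℝ} (hδ : IsDissimilarity δ) {α : W → X} (hα : Function.Surjective α) {a b : X}
    (hab : a ≠ b) {e : ℝ} (he : 1 < e) :
    ¬ RandomizedResponseUninformative (fun w x => δ (α w) x) a b e := by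
  intro h
  set L : W → X → ℝ := fun w x => δ (α w) x
  obtain ⟨wa, hwa⟩ := hα a
  obtain ⟨wb, hwb⟩ := hα b
  refine false_of_dilation_eq he (f := fun r => pairRisk L a b r 1) (K := δ a b)
    (fun r hr => le_inf' _ _ fun w _ => ?_) (fun r _ => ?_) (fun r _ => ?_) ?_ (fun r hr => ?_)
  · exact add_nonneg (mul_nonneg hr.le (hδ.nonneg _ _)) (mul_nonneg zero_le_one (hδ.nonneg _ _))
  · simpa [L, hwa, hδ.self_eq_zero] using pairRisk_le L a b wa r 1
  · simpa [L, hwb, hδ.self_eq_zero, hδ.symm b a] using pairRisk_le L a b wb r 1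
  · refine (lt_inf'_iff _).2 fun w _ => ?_
    by_cases hw : α w = a
    · simpa [L, hw, hδ.self_eq_zero] using hδ.pos a b hab
    · nlinarith [hδ.pos _ _ hw, hδ.nonneg (α w) b]
  · have he0 : 0 < e := by linarith
    have hscale : pairRisk L a b r e = e * pairRisk L a b (r / e) 1 := by
      rw [← pairRisk_smul L a b he0.le, mul_div_cancel₀ r he0.ne', mul_one]
    have := h r 1 hr.le zero_le_one
    have := pairRisk_mul_add_pairRisk_mul_le L a b he0.le r 1
    simp only [one_mul] at *
    linarith

theorem no_universally_optimal_strictMono_discrete_general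
    {X W : Type} [Fintype X] [Fintype W] [Nonempty W]
    (hcard : 2 < Fintype.card X) (ε : ℝ) (hε : 0 < ε)
    (ℓ : W → X → ℝ)
    (d : X → X → ℝ) (hd : IsMetric d)
    (α : W → X) (hα : Function.Bijective α)
    (m : ℝ → ℝ) (hm : StrictMono m)
    (hℓ : ∀ w x, ℓ w x = m (d (α w) x)) :
    ¬ ∃ (Y : Type) (_ : Fintype Y) (_ : Nonempty Y) (M : X → Y → ℝ),
        IsChannel M ∧ IsPrivateD ε M ∧ UnivOptimalD ε M ℓ := by
  rintro ⟨Y, _, _, M, hM, hMp, hopt⟩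
  obtain rfl : ℓ = fun w x => m (d (α w) x) := funext₂ hℓ
  have he : 1 < Real.exp ε := Real.one_lt_exp_iff.2 hε
  have hδ := hd.isDissimilarity_comp hm
  have hoptδ := hopt.sub_const hM (m 0)
  obtain ⟨a, b, hab, hmin⟩ :=
    exists_ne_forall_le_of_one_lt_card (by omega) fun x y => m (d x y) - m 0
  obtain ⟨c, hca, hcb⟩ := exists_ne_ne_of_two_lt_card hcard a b
  have hrows_ab := hoptδ.eq_mul_or_eq_mul_of_minimal hδ hα.2 hε.le hM hMp hab hmin
  by_cases hrows_ac : ∀ y, M c y = Real.exp ε * M a y ∨ M a y = Real.exp ε * M c y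
  · have hrow : M b = M c := funext fun y => eq_of_eq_mul_or_eq_mul he (hM.1 b y) (hM.1 c y)
      (hrows_ab y) (hrows_ac y) (hMp b c y hcb.symm) (hMp c b y hcb)
    exact not_randomizedResponseUninformative hδ hα.2 hcb.symm he
      (hoptδ.randomizedResponseUninformative_of_row_eq hε.le hM hcb.symm hrow)
  · push Not at hrows_ac
    obtain ⟨y₀, h₁, h₂⟩ := hrows_ac
    exact not_randomizedResponseUninformative hδ hα.2 hca.symm he
      (hoptδ.randomizedResponseUninformative_of_ne hε hM hMp hca.symm h₁ h₂)

/-- Impossibility: for `|X| > 2`, no `ε·d_D`-private channel is universally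
`ℓ`-optimal for a loss function `ℓ` that is strictly monotone wrt some metric. -/
theorem no_universally_optimal_strictMono_discrete
    {X W : Type} [Fintype X] [Nonempty X] [Fintype W] [Nonempty W]
    (hcard : 2 < Fintype.card X) (ε : ℝ) (hε : 0 < ε)
    (ℓ : W → X → ℝ)
    (d : X → X → ℝ) (hd : IsMetric d)
    (α : W → X) (hα : Function.Bijective α)
    (m : ℝ → ℝ) (hm : StrictMono m)
    (hℓ : ∀ w x, ℓ w x = m (d (α w) x)) :
    ¬ ∃ (Y : Type) (_ : Fintype Y) (_ : Nonempty Y) (M : X → Y → ℝ),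
        IsChannel M ∧ IsPrivateD ε M ∧ UnivOptimalD ε M ℓ :=
  no_universally_optimal_strictMono_discrete_general hcard ε hε ℓ d hd α hα m hm hℓ
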